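/- For every f and f' in V, the quantity 𝟙(f,f') := 3^{−|supp₃ f ∪ supp₃ f'|} · ∏_{r | Δ(f)Δ(f')} ( ∑_{(z,z') ∈ 𝔽₃² with f(r)z + f'(r)z' = 0} χ(zf + z'f')(r) ) is equal to 0 or 1. -/

import Mathlib

/-! ### The Eisenstein integers `ℤ[j]` -/

/-- The Eisenstein integers `ℤ[j]`: elements `a + b·ω` with `a b : ℤ`,
where `ω = j = (−1 + i√3)/2` satisfies `ω² + ω + 1 = 0`. -/
@[ext] structure Eisen where
  re : ℤ
  im : ℤ
deriving DecidableEq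

namespace Eisen

instance : Zero Eisen := ⟨⟨0, 0⟩⟩
instance : One Eisen := ⟨⟨1, 0⟩⟩
instance : Add Eisen := ⟨fun a b => ⟨a.re + b.re, a.im + b.im⟩⟩
instance : Neg Eisen := ⟨fun a => ⟨-a.re, -a.im⟩⟩
/-- `(a+bω)(c+dω) = (ac − bd) + (ad + bc − bd)ω`, using `ω² = −1 − ω`. -/
instance : Mul Eisen := ⟨fun a b =>
  ⟨a.re * b.re - a.im * b.im, a.re * b.im + a.im * b.re - a.im * b.im⟩⟩

@[simp] lemma zero_re : (0 : Eisen).re = 0 := rfl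
@[simp] lemma zero_im : (0 : Eisen).im = 0 := rfl
@[simp] lemma one_re : (1 : Eisen).re = 1 := rfl
@[simp] lemma one_im : (1 : Eisen).im = 0 := rfl
@[simp] lemma add_re (a b : Eisen) : (a + b).re = a.re + b.re := rfl
@[simp] lemma add_im (a b : Eisen) : (a + b).im = a.im + b.im := rfl
@[simp] lemma neg_re (a : Eisen) : (-a).re = -a.re := rfl
@[simp] lemma neg_im (a : Eisen) : (-a).im = -a.im := rfl
@[simp] lemma mul_re (a b : Eisen) : (a * b).re = a.re * b.re - a.im * b.im := rfl
@[simp] lemma mul_im (a b : Eisen) :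
    (a * b).im = a.re * b.im + a.im * b.re - a.im * b.im := rfl

instance commRing : CommRing Eisen where
  add_assoc a b c := by ext <;> simp <;> ring
  zero_add a := by ext <;> simp
  add_zero a := by ext <;> simp
  add_comm a b := by ext <;> simp <;> ring
  neg_add_cancel a := by ext <;> simp
  mul_assoc a b c := by ext <;> simp <;> ring
  one_mul a := by ext <;> simp
  mul_one a := by ext <;> simp
  left_distrib a b c := by ext <;> simp <;> ring
  right_distrib a b c := by ext <;> simp <;> ring
  zero_mul a := by ext <;> simp
  mul_zero a := by ext <;> simp
  mul_comm a b := by ext <;> simp <;> ring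
  nsmul := nsmulRec
  zsmul := zsmulRec

/-- The root of unity `ω = j` as an Eisenstein integer. -/
def ω : Eisen := ⟨0, 1⟩

/-- The complex number `j = (−1 + i√3)/2`. -/
noncomputable def jC : ℂ := ⟨-(1 / 2), Real.sqrt 3 / 2⟩

/-- The canonical embedding `ℤ[j] → ℂ`, sending `a + bω` to `a + b·j`. -/
noncomputable def toComplex (z : Eisen) : ℂ := (z.re : ℂ) + (z.im : ℂ) * jC

/-- The norm `N(z) = z·z̄ = a² − ab + b²` of an Eisenstein integer. -/
def normE (z : Eisen) : ℤ := z.re ^ 2 - z.re * z.im + z.im ^ 2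

/-- `π` is a *standard prime*: a prime element of `ℤ[j]` that is primary
(`π ≡ 2 mod 3`) and has positive imaginary part. These are exactly the elements
arising in the standard decomposition `p = π·π̄` of rational primes `p ≡ 1 (mod 3)`. -/
noncomputable def IsStandardPrime (π : Eisen) : Prop :=
  Prime π ∧ (3 : Eisen) ∣ (π - 2) ∧ 0 < (toComplex π).im

open scoped Classical in
/-- The cubic residue symbol `(α/π)₃ ∈ {1, j, j²}` (or `0` if `π ∣ α`):
the unique power `j^m` with `α^((N(π)−1)/3) ≡ j^m (mod π)`. -/
noncomputable def cubicSym (π α : Eisen) : ℂ :=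
  if π ∣ α then 0
  else if π ∣ α ^ (((normE π).toNat - 1) / 3) - 1 then 1
  else if π ∣ α ^ (((normE π).toNat - 1) / 3) - ω then jC
  else jC ^ 2

open scoped Classical in
/-- The standard prime above a rational prime `p ≡ 1 (mod 3)` (junk value `0` otherwise). -/
noncomputable def stdPrime (p : ℕ) : Eisen :=
  if h : ∃ π : Eisen, IsStandardPrime π ∧ normE π = p then h.choose else 0

end Eisen

/-! ### The cubic Dirichlet characters `χ_p` and the characters `χ(f)` -/

open Eisen

open scoped Classical in
/-- The cubic character `χ_3` modulo `9`, of order 3, normalized by `χ_3(2) = j`. -/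
noncomputable def chi3 (n : ℤ) : ℂ :=
  if n % 9 = 1 ∨ n % 9 = 8 then 1
  else if n % 9 = 2 ∨ n % 9 = 7 then jC
  else if n % 9 = 4 ∨ n % 9 = 5 then jC ^ 2
  else 0

open scoped Classical in
/-- The distinguished cubic character `χ_p` for `p ∈ 𝒫₃`: for `p ≡ 1 (mod 3)` it is
`χ_p(n) = (n/π)₃` with `π` the standard prime above `p`; for `p = 3` it is `χ_3`. -/
noncomputable def chiAt (p : ℕ) (n : ℤ) : ℂ :=
  if p = 3 then chi3 n else cubicSym (stdPrime p) (n : Eisen)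

/-- `f` belongs to `V`: a finitely supported function `𝒫₃ → 𝔽₃`
(extended by zero off the set `𝒫₃ = {p prime : p ≡ 0, 1 (mod 3)}`). -/
def IsV (f : ℕ → ZMod 3) : Prop :=
  {p | f p ≠ 0}.Finite ∧ ∀ p, f p ≠ 0 → p.Prime ∧ (p % 3 = 0 ∨ p % 3 = 1)

/-- `f` belongs to `V*`: it belongs to `V` and `f(3) = 0`. -/
def IsVstar (f : ℕ → ZMod 3) : Prop := IsV f ∧ f 3 = 0

/-- The Dirichlet character `χ(f) = ∏_{p ∈ 𝒫₃} χ_p^{f(p)}` attached to `f ∈ V`. -/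
noncomputable def chiF (f : ℕ → ZMod 3) (n : ℤ) : ℂ :=
  ∏ᶠ p : ℕ, chiAt p n ^ (f p).val

/-- `supp₃ f`: the support of `f` restricted to the primes `≡ 1 (mod 3)`. -/
def supp3 (f : ℕ → ZMod 3) : Set ℕ := {p | f p ≠ 0 ∧ p % 3 = 1}

/-- `Δ(f)`: the product of the primes in `supp₃ f`. -/
noncomputable def Deltaf (f : ℕ → ZMod 3) : ℕ := ∏ᶠ p ∈ supp3 f, p

open scoped Classical in
/-- The quantity `𝟙(f, f')`. -/
noncomputable def indicFF (f f' : ℕ → ZMod 3) : ℂ :=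
  (3 : ℂ) ^ (-(Set.ncard (supp3 f ∪ supp3 f') : ℤ)) *
    ∏ r ∈ (Deltaf f * Deltaf f').primeFactors,
      ∑ zz ∈ Finset.univ.filter
          (fun zz : ZMod 3 × ZMod 3 => f r * zz.1 + f' r * zz.2 = 0),
        chiF (fun p => zz.1 * f p + zz.2 * f' p) (r : ℤ)

/-!
For a prime `r ∣ Δ(f)Δ(f')`, the pairs `(z, z')` with `f(r)z + f'(r)z' = 0` form a line
`H_r ≤ 𝔽₃²`. On `H_r` the coefficient of `zf + z'f'` at `r` vanishes, so `χ(zf + z'f')(r)`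
only involves the values `χ_p(r)`, `p ≠ r`, which are cube roots of unity; hence
`(z, z') ↦ χ(zf + z'f')(r)` is an additive character of `H_r` and the `r`-th factor is `0`
or `|H_r| = 3`. The product is then `0` or `3 ^ |supp₃ f ∪ supp₃ f'|`, which the normalising
power of `3` cancels.
-/

open Finset

lemma Finset.prod_eq_zero_or_eq_pow_card {ι M₀ : Type*} [CommMonoidWithZero M₀]
    {s : Finset ι} {g : ι → M₀} {c : M₀} (h : ∀ i ∈ s, g i = 0 ∨ g i = c) :
    ∏ i ∈ s, g i = 0 ∨ ∏ i ∈ s, g i = c ^ #s := by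
  by_cases h0 : ∃ i ∈ s, g i = 0
  · obtain ⟨i, hi, hi0⟩ := h0
    exact Or.inl (prod_eq_zero hi hi0)
  · push Not at h0
    exact Or.inr (prod_eq_pow_card fun i hi => (h i hi).resolve_left (h0 i hi))

namespace AddChar

variable {G R : Type*} [AddGroup G] [Fintype G] [CommRing R] [IsDomain R]

lemma sum_filter_mem_eq_zero_or_card (ψ : AddChar G R) (H : AddSubgroup G)
    [DecidablePred (· ∈ H)] :
    ∑ x ∈ univ.filter (· ∈ H), ψ x = 0 ∨
      ∑ x ∈ univ.filter (· ∈ H), ψ x = #(univ.filter (· ∈ H)) := by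
  classical
  rw [sum_subtype (p := (· ∈ H)) _ (by simp) ψ, ← Fintype.card_subtype]
  have := (ψ.compAddMonoidHom H.subtype).sum_eq_ite
  split_ifs at this
  exacts [Or.inr this, Or.inl this]

def finsetPowProd {ι M : Type*} [CommMonoid M] (n : ℕ) [NeZero n] (S : Finset ι) (w : ι → M)
    (hw : ∀ i ∈ S, w i ^ n = 1) : AddChar (ι → ZMod n) M where
  toFun g := ∏ i ∈ S, w i ^ (g i).val
  map_zero_eq_one' := by simp
  map_add_eq_mul' g h := by
    rw [← prod_mul_distrib]
    exact prod_congr rfl fun i hi => map_add_eq_mul (zmodChar n (hw i hi)) (g i) (h i)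

@[simp]
lemma finsetPowProd_apply {ι M : Type*} [CommMonoid M] (n : ℕ) [NeZero n] (S : Finset ι)
    (w : ι → M) (hw : ∀ i ∈ S, w i ^ n = 1) (g : ι → ZMod n) :
    finsetPowProd n S w hw g = ∏ i ∈ S, w i ^ (g i).val :=
  rfl

end AddChar

lemma card_filter_linear_eq_zero_zmod_three {a b : ZMod 3} (hab : a ≠ 0 ∨ b ≠ 0) :
    #(univ.filter fun zz : ZMod 3 × ZMod 3 => a * zz.1 + b * zz.2 = 0) = 3 := by
  revert a b; decide

namespace Eisen

lemma jC_pow_three : jC ^ 3 = 1 := by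
  have h : jC ^ 2 + jC + 1 = 0 := by
    apply Complex.ext <;> simp [jC, sq] <;>
      nlinarith [Real.mul_self_sqrt (show (0 : ℝ) ≤ 3 by norm_num)]
  linear_combination (jC - 1) * h

lemma jC_sq_pow_three : (jC ^ 2) ^ 3 = 1 := by
  rw [← pow_mul, pow_mul', jC_pow_three, one_pow]

lemma normE_mul (a b : Eisen) : normE (a * b) = normE a * normE b := by
  simp only [normE, mul_re, mul_im]; ring

lemma natCast_eq (n : ℕ) : (n : Eisen) = ⟨n, 0⟩ := by
  induction n with
  | zero => rfl
  | succ n ih => ext <;> simp [ih]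

lemma normE_natCast (n : ℕ) : normE (n : Eisen) = n ^ 2 := by
  simp [natCast_eq, normE]

lemma not_dvd_natCast_of_normE_eq {π : Eisen} {p r : ℕ} (hπ : normE π = p) (hp : p.Prime)
    (hr : r.Prime) (hpr : p ≠ r) : ¬ π ∣ (r : Eisen) := by
  rintro ⟨c, hc⟩
  have hdvd : (p : ℤ) ∣ (r : ℤ) ^ 2 := ⟨normE c, by rw [← normE_natCast, hc, normE_mul, hπ]⟩
  have hpr' : p ∣ r := hp.dvd_of_dvd_pow (by exact_mod_cast hdvd)
  exact hpr ((Nat.prime_dvd_prime_iff_eq hp hr).mp hpr')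

lemma not_stdPrime_dvd_natCast {p r : ℕ} (hp : p.Prime) (hr : r.Prime) (hpr : p ≠ r) :
    ¬ stdPrime p ∣ (r : Eisen) := by
  rw [stdPrime]
  split_ifs with h
  · exact not_dvd_natCast_of_normE_eq h.choose_spec.2 hp hr hpr
  · rw [zero_dvd_iff, natCast_eq]
    exact fun h0 => hr.ne_zero (by simpa using congrArg re h0)

lemma cubicSym_pow_three {π α : Eisen} (h : ¬ π ∣ α) : cubicSym π α ^ 3 = 1 := by
  rw [cubicSym, if_neg h]
  split_ifs <;> simp [jC_pow_three, jC_sq_pow_three]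

end Eisen

lemma chi3_pow_three {n : ℤ} (h : ¬ (3 : ℤ) ∣ n) : chi3 n ^ 3 = 1 := by
  unfold chi3
  split_ifs <;> first | omega | simp [jC_pow_three, jC_sq_pow_three]

lemma chiAt_pow_three {p r : ℕ} (hp : p.Prime) (hr : r.Prime) (hpr : p ≠ r) :
    chiAt p r ^ 3 = 1 := by
  rw [chiAt]
  split_ifs with h3
  · subst h3
    apply chi3_pow_three
    exact_mod_cast fun h => hpr ((Nat.prime_dvd_prime_iff_eq hp hr).mp h)
  · rw [Int.cast_natCast]
    exact cubicSym_pow_three (not_stdPrime_dvd_natCast hp hr hpr)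

lemma chiF_eq_prod {g : ℕ → ZMod 3} {T : Finset ℕ} (hT : ∀ p, g p ≠ 0 → p ∈ T) (n : ℤ) :
    chiF g n = ∏ p ∈ T, chiAt p n ^ (g p).val := by
  refine finprod_eq_prod_of_mulSupport_subset _ fun p hp => ?_
  by_contra hpT
  simp [not_not.mp (mt (hT p) hpT)] at hp

lemma sum_chiF_eq_zero_or_three {f f' : ℕ → ZMod 3}
    (hfin : ({p | f p ≠ 0} ∪ {p | f' p ≠ 0}).Finite)
    (hf : ∀ p, f p ≠ 0 → p.Prime) (hf' : ∀ p, f' p ≠ 0 → p.Prime) {r : ℕ}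
    (hr : f r ≠ 0 ∨ f' r ≠ 0) :
    ∑ zz ∈ univ.filter (fun zz : ZMod 3 × ZMod 3 => f r * zz.1 + f' r * zz.2 = 0),
        chiF (fun p => zz.1 * f p + zz.2 * f' p) r = 0 ∨
      ∑ zz ∈ univ.filter (fun zz : ZMod 3 × ZMod 3 => f r * zz.1 + f' r * zz.2 = 0),
        chiF (fun p => zz.1 * f p + zz.2 * f' p) r = 3 := by
  classical
  set T := hfin.toFinset
  have hT : ∀ p, f p ≠ 0 ∨ f' p ≠ 0 → p ∈ T := fun p hp => by simpa [T] using hp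
  have hTprime : ∀ p ∈ T, p.Prime := fun p hp => by
    rcases (by simpa [T] using hp : f p ≠ 0 ∨ f' p ≠ 0) with h | h
    exacts [hf p h, hf' p h]
  have hrprime := hTprime r (hT r hr)
  let L : ZMod 3 × ZMod 3 →ₗ[ZMod 3] (ℕ → ZMod 3) :=
    (LinearMap.toSpanSingleton _ _ f).coprod (LinearMap.toSpanSingleton _ _ f')
  have hL : ∀ zz p, L zz p = zz.1 * f p + zz.2 * f' p := fun zz p => by simp [L]
  let H := (LinearMap.ker ((LinearMap.proj r).comp L)).toAddSubgroup
  have hmem : ∀ zz, f r * zz.1 + f' r * zz.2 = 0 ↔ zz ∈ H := by simp [H, hL, mul_comm]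
  let ψ := AddChar.finsetPowProd 3 (T.erase r) (fun p => chiAt p r) fun p hp =>
    chiAt_pow_three (hTprime p (mem_of_mem_erase hp)) hrprime (ne_of_mem_erase hp)
  have hterm : ∀ zz ∈ H, chiF (fun p => zz.1 * f p + zz.2 * f' p) r = ψ (L zz) := by
    intro zz hzz
    have hzr : zz.1 * f r + zz.2 * f' r = 0 := by simpa [mul_comm] using (hmem zz).mpr hzz
    rw [chiF_eq_prod (T := T.erase r)]
    · simp [ψ, hL]
    · intro p hp
      refine mem_erase.mpr ⟨fun hpr => hp (hpr ▸ hzr), hT p ?_⟩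
      by_contra! h
      simp [h.1, h.2] at hp
  have hcard : #(univ.filter (· ∈ H)) = 3 := by
    rw [← filter_congr fun zz _ => hmem zz, card_filter_linear_eq_zero_zmod_three hr]
  rw [filter_congr fun zz _ => hmem zz,
    sum_congr rfl fun zz hzz => hterm zz (mem_filter.mp hzz).2]
  simpa [hcard] using (ψ.compAddMonoidHom L.toAddMonoidHom).sum_filter_mem_eq_zero_or_card H

lemma IsV.finite_supp3 {f : ℕ → ZMod 3} (hf : IsV f) : (supp3 f).Finite :=
  hf.1.subset fun _ hp => hp.1

lemma IsV.prime_of_mem_supp3 {f : ℕ → ZMod 3} (hf : IsV f) : ∀ p ∈ supp3 f, p.Prime :=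
  fun p hp => (hf.2 p hp.1).1

section PrimeSet

variable {S : Set ℕ} (hS : S.Finite) (hprime : ∀ p ∈ S, p.Prime)
include hS hprime

lemma finprod_mem_primes_ne_zero : ∏ᶠ p ∈ S, p ≠ 0 := by
  rw [finprod_mem_eq_finite_toFinset_prod _ hS, prod_ne_zero_iff]
  exact fun p hp => (hprime p (by simpa using hp)).ne_zero

lemma coe_primeFactors_finprod_mem_primes : ((∏ᶠ p ∈ S, p).primeFactors : Set ℕ) = S := by
  rw [finprod_mem_eq_finite_toFinset_prod _ hS,
    Nat.primeFactors_prod fun p hp => hprime p (by simpa using hp), hS.coe_toFinset]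

end PrimeSet

lemma coe_primeFactors_Deltaf_mul {f f' : ℕ → ZMod 3} (hf : IsV f) (hf' : IsV f') :
    ((Deltaf f * Deltaf f').primeFactors : Set ℕ) = supp3 f ∪ supp3 f' := by
  have hprime := hf.prime_of_mem_supp3
  have hprime' := hf'.prime_of_mem_supp3
  rw [Deltaf, Deltaf, Nat.primeFactors_mul (finprod_mem_primes_ne_zero hf.finite_supp3 hprime)
    (finprod_mem_primes_ne_zero hf'.finite_supp3 hprime'), coe_union,
    coe_primeFactors_finprod_mem_primes hf.finite_supp3 hprime,
    coe_primeFactors_finprod_mem_primes hf'.finite_supp3 hprime']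

/-- For every `f, f' ∈ V`, the quantity `𝟙(f, f')` equals `0` or `1`. -/
theorem indicFF_eq_zero_or_one (f f' : ℕ → ZMod 3) (hf : IsV f) (hf' : IsV f') :
    indicFF f f' = 0 ∨ indicFF f f' = 1 := by
  set R := (Deltaf f * Deltaf f').primeFactors
  have hR : (R : Set ℕ) = supp3 f ∪ supp3 f' := coe_primeFactors_Deltaf_mul hf hf'
  rw [indicFF, ← hR, Set.ncard_coe_finset]
  obtain h | h := prod_eq_zero_or_eq_pow_card fun r (hr : r ∈ R) =>
    sum_chiF_eq_zero_or_three (hf.1.union hf'.1) (fun p hp => (hf.2 p hp).1)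
      (fun p hp => (hf'.2 p hp).1) (((Set.ext_iff.mp hR r).mp hr).imp And.left And.left)
  · exact Or.inl (by rw [h, mul_zero])
  · right
    rw [h, ← zpow_natCast, ← zpow_add₀ three_ne_zero, neg_add_cancel, zpow_zero]
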